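/- arXiv:2309.12260 — 5 statements merged into one kernel-verified Lean document; each statement's English description precedes it below -/
import Mathlib

section
/- Let f = e^{-φ} be an upper semi-continuous log-concave function on ℝⁿ with nonzero finite L¹ norm. Then there exist constants c > 0 and d ∈ ℝ such that φ(x) ≥ c|x| + d for all x ∈ ℝⁿ. -/
open MeasureTheory Filter Topology
open scoped RealInnerProductSpace
open Metric Set
open scoped ENNReal

noncomputable section

/-- Convexity for extended-real-valued functions on `ℝⁿ`. -/
def ERealConvexOn {n : ℕ} (φ : EuclideanSpace ℝ (Fin n) → EReal) : Prop :=
  ∀ x y : EuclideanSpace ℝ (Fin n), ∀ a b : ℝ, 0 ≤ a → 0 ≤ b → a + b = 1 →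
    φ (a • x + b • y) ≤ (a : EReal) * φ x + (b : EReal) * φ y

/-- `e^{-a}` for an extended real `a ∈ ℝ ∪ {+∞}` (value `0` at `+∞`). -/
def expNegE (a : EReal) : ℝ := if a = ⊤ then 0 else Real.exp (-a.toReal)

section Aux

lemma aux_nontrivial {n : ℕ} (hn : 0 < n) : Nontrivial (EuclideanSpace ℝ (Fin n)) := by
  refine ⟨⟨0, EuclideanSpace.single ⟨0, hn⟩ 1, fun h => ?_⟩⟩
  have := congrArg (fun v => v ⟨0, hn⟩) h.symm
  simp [EuclideanSpace.single_apply] at this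

lemma aux_bounded {n : ℕ} (hn : 0 < n) (s : Set (EuclideanSpace ℝ (Fin n))) (hs : Convex ℝ s)
    (x₀ : EuclideanSpace ℝ (Fin n)) (r : ℝ) (hr : 0 < r) (hball : closedBall x₀ r ⊆ s)
    (hfin : volume s ≠ ⊤) : ∃ R : ℝ, s ⊆ closedBall x₀ R := by
  haveI := aux_nontrivial hn
  by_contra h
  push_neg at h
  set v := volume (closedBall (0 : EuclideanSpace ℝ (Fin n)) (r/2)) with hv
  have hvpos : 0 < v := measure_closedBall_pos _ _ (by linarith)
  have key : ∀ N : ℕ, (N : ℝ≥0∞) * v ≤ volume s := by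
    intro N
    rcases Nat.eq_zero_or_pos N with hN | hN
    · simp [hN]
    obtain ⟨p, hp, hpd⟩ := not_subset.1 (h (4 * r * N))
    rw [mem_closedBall, not_le] at hpd
    set D := dist p x₀ with hD
    have hDpos : 0 < D := lt_of_le_of_lt (by positivity) hpd
    have hDnorm : ‖p - x₀‖ = D := by rw [hD, dist_eq_norm]
    set c : ℕ → EuclideanSpace ℝ (Fin n) := fun j => x₀ + ((2*r*j)/D) • (p - x₀) with hc
    -- each ball is in s
    have hsub : ∀ j < N, closedBall (c j) (r/2) ⊆ s := by
      intro j hj y hy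
      set t : ℝ := 2*r*j/D with ht
      have ht0 : 0 ≤ t := by positivity
      have htj : (j : ℝ) ≤ (N : ℝ) - 1 := by
        have : (j : ℝ) + 1 ≤ N := by exact_mod_cast hj
        linarith
      have ht2 : t ≤ 1/2 := by
        rw [ht, div_le_iff₀ hDpos]
        nlinarith [hpd]
      have hne : (1 - t) ≠ 0 := by norm_num; linarith
      set z := x₀ + (1-t)⁻¹ • (y - c j) with hz
      have hzmem : z ∈ closedBall x₀ r := by
        rw [mem_closedBall, dist_eq_norm]
        have : z - x₀ = (1-t)⁻¹ • (y - c j) := by rw [hz]; abel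
        rw [this, norm_smul]
        have hyc : ‖y - c j‖ ≤ r/2 := by rwa [mem_closedBall, dist_eq_norm] at hy
        have h1 : |(1-t)⁻¹| ≤ 2 := by
          have h1t : (0:ℝ) < 1 - t := by linarith
          rw [abs_of_pos (inv_pos.2 h1t)]
          rw [inv_le_comm₀ (by linarith) (by norm_num)]
          linarith
        calc |(1-t)⁻¹| * ‖y - c j‖ ≤ 2 * (r/2) := by
              apply mul_le_mul h1 hyc (norm_nonneg _) (by norm_num)
          _ = r := by ring
      have hcomb : y = t • p + (1-t) • z := by
        rw [hz, hc]
        simp only [smul_add, smul_smul]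
        rw [mul_inv_cancel₀ hne]
        module
      rw [hcomb]
      exact hs hp (hball hzmem) ht0 (by linarith) (by ring)
    -- balls are disjoint
    have hdisj : (↑(Finset.range N) : Set ℕ).Pairwise
        (Function.onFun Disjoint fun j => closedBall (c j) (r/2)) := by
      intro i _ j _ hij
      apply closedBall_disjoint_closedBall
      have : dist (c i) (c j) = 2*r*|(i:ℝ) - j| := by
        rw [hc, dist_eq_norm]
        have : (x₀ + ((2*r*i)/D) • (p - x₀)) - (x₀ + ((2*r*j)/D) • (p - x₀))
            = ((2*r*i)/D - (2*r*j)/D) • (p - x₀) := by module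
        rw [this, norm_smul, hDnorm, Real.norm_eq_abs, div_sub_div_same, abs_div,
          abs_of_pos hDpos, div_mul_cancel₀ _ (ne_of_gt hDpos)]
        rw [show 2*r*(i:ℝ) - 2*r*j = 2*r*((i:ℝ) - j) by ring, abs_mul,
          abs_of_pos (by linarith : (0:ℝ) < 2*r)]
      rw [this]
      have : (1:ℝ) ≤ |(i:ℝ) - j| := by
        have : (i:ℝ) - j ≠ 0 := by
          simp only [sub_ne_zero]
          exact_mod_cast hij
        rcases lt_or_gt_of_ne this with h' | h'
        · rw [abs_of_neg h']
          have : (i:ℝ) + 1 ≤ j := by exact_mod_cast Nat.succ_le_of_lt (by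
            rcases lt_or_gt_of_ne (fun hh => hij (by exact_mod_cast hh) : (i:ℝ) ≠ j) with _|_
            · exact_mod_cast (by exact_mod_cast ‹(i:ℝ) < j› : (i:ℝ) < j)
            · exfalso; linarith)
          linarith
        · rw [abs_of_pos h']
          have : (j:ℝ) + 1 ≤ i := by
            have : j < i := by exact_mod_cast (by linarith : (j:ℝ) < i)
            exact_mod_cast Nat.succ_le_of_lt this
          linarith
      nlinarith
    have hmeas : volume (⋃ j ∈ Finset.range N, closedBall (c j) (r/2))
        = ∑ j ∈ Finset.range N, volume (closedBall (c j) (r/2)) :=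
      measure_biUnion_finset hdisj (fun j _ => measurableSet_closedBall)
    have hunion : (⋃ j ∈ Finset.range N, closedBall (c j) (r/2)) ⊆ s := by
      refine Set.iUnion₂_subset fun j hj => hsub j (Finset.mem_range.1 hj)
    calc (N : ℝ≥0∞) * v = ∑ _j ∈ Finset.range N, v := by
          rw [Finset.sum_const, Finset.card_range, nsmul_eq_mul]
      _ = ∑ j ∈ Finset.range N, volume (closedBall (c j) (r/2)) := by
          refine Finset.sum_congr rfl fun j _ => ?_
          rw [hv, Measure.addHaar_closedBall_center volume (c j)]
      _ = volume (⋃ j ∈ Finset.range N, closedBall (c j) (r/2)) := hmeas.symm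
      _ ≤ volume s := measure_mono hunion
  -- contradiction
  obtain ⟨N, hN⟩ := ENNReal.exists_nat_gt
    (ENNReal.div_lt_top hfin (ne_of_gt hvpos)).ne
  have : volume s < N * v := by
    rwa [ENNReal.div_lt_iff (Or.inl (ne_of_gt hvpos)) (Or.inl (measure_closedBall_lt_top).ne)] at hN
  exact absurd (key N) (not_le.2 this)


variable {n : ℕ} {φ : EuclideanSpace ℝ (Fin n) → EReal}

/-- extract real value from a bounded-above φ value -/
lemma aux_getReal (hbot : ∀ x, φ x ≠ ⊥) {z : EuclideanSpace ℝ (Fin n)} {c : ℝ}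
    (hz : φ z ≤ ((c : ℝ) : EReal)) : ∃ v : ℝ, φ z = (v : EReal) ∧ v ≤ c := by
  have hne : φ z ≠ ⊤ := fun h => by
    rw [h] at hz; exact absurd (lt_of_le_of_lt hz (EReal.coe_lt_top c)) (lt_irrefl _)
  refine ⟨(φ z).toReal, (EReal.coe_toReal hne (hbot z)).symm, ?_⟩
  rw [← EReal.coe_le_coe_iff, EReal.coe_toReal hne (hbot z)]
  exact hz

lemma aux_sublevel_convex (hconv : ERealConvexOn φ) (hbot : ∀ x, φ x ≠ ⊥) (c : ℝ) :
    Convex ℝ {x | φ x ≤ ((c : ℝ) : EReal)} := by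
  intro x hx y hy a b ha hb hab
  obtain ⟨vx, hvx, hvxc⟩ := aux_getReal hbot hx
  obtain ⟨vy, hvy, hvyc⟩ := aux_getReal hbot hy
  have := hconv x y a b ha hb hab
  rw [hvx, hvy] at this
  have heq : (a : EReal) * (vx : EReal) + (b : EReal) * (vy : EReal)
      = ((a * vx + b * vy : ℝ) : EReal) := by
    rw [← EReal.coe_mul, ← EReal.coe_mul, ← EReal.coe_add]
  rw [heq] at this
  refine le_trans this (EReal.coe_le_coe_iff.2 ?_)
  calc a * vx + b * vy ≤ a * c + b * c :=
        add_le_add (mul_le_mul_of_nonneg_left hvxc ha) (mul_le_mul_of_nonneg_left hvyc hb)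
    _ = c := by rw [← add_mul, hab, one_mul]

lemma aux_inner_calc (a a₀ K R t r b : ℝ) (hr : 0 < r) (ht : 0 < t) (htR : t ≤ R + 1)
    (hK : a₀ ≤ K) (hbK : b ≤ K)
    (hreal : a₀ ≤ (r/(t+r)) * a + (1 - r/(t+r)) * b) :
    a₀ + (a₀ - K) * (R + 1) / r ≤ a := by
  have htr : (0:ℝ) < t + r := by linarith
  have hl0 : 0 < r / (t + r) := by positivity
  have hl1 : r / (t + r) < 1 := by rw [div_lt_one htr]; linarith
  have hb2 : (1 - r/(t+r)) * b ≤ (1 - r/(t+r)) * K :=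
    mul_le_mul_of_nonneg_left hbK (by linarith)
  have h4 : a₀ ≤ (r/(t+r)) * a + (1 - r/(t+r)) * K := by linarith
  have hstep : a₀ - K ≤ (r / (t + r)) * (a - K) := by nlinarith
  have hstep2 : (a₀ - K) * (t + r) ≤ (a - K) * r := by
    have h2 := mul_le_mul_of_nonneg_right hstep htr.le
    calc (a₀ - K) * (t + r) ≤ ((r / (t + r)) * (a - K)) * (t + r) := h2
      _ = (a - K) * r := by field_simp
  have hm : 0 ≤ (K - a₀) * (R + 1 - t) := mul_nonneg (by linarith) (by linarith)
  have hfin2 : (a₀ - K) * (R + 1) ≤ (a - a₀) * r := by nlinarith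
  have hfin3 : (a₀ - K) * (R + 1) / r ≤ a - a₀ := by
    rw [div_le_iff₀ hr]; linarith
  linarith

lemma aux_outer_calc (a a₀ K R t : ℝ) (hR : 0 ≤ R) (ht : R + 1 ≤ t) (hK : a₀ ≤ K)
    (h : K + 1 < (1 - (R+1)/t) * a₀ + ((R+1)/t) * a) : K + t/(R+1) ≤ a := by
  have htpos : (0:ℝ) < t := by linarith
  have hl0 : 0 < (R+1)/t := by positivity
  have hl1 : (R+1)/t ≤ 1 := by rw [div_le_one htpos]; linarith
  have h2 : (1 - (R+1)/t) * a₀ ≤ (1 - (R+1)/t) * K :=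
    mul_le_mul_of_nonneg_left hK (by linarith)
  have h3 : ((R+1)/t) * K + 1 < ((R+1)/t) * a := by nlinarith
  have h4 : K + 1/((R+1)/t) ≤ a := by
    have h5 := mul_le_mul_of_nonneg_left (le_of_lt h3) (le_of_lt (by positivity : (0:ℝ) < ((R+1)/t)⁻¹))
    rw [mul_add, ← mul_assoc, inv_mul_cancel₀ (ne_of_gt hl0), ← mul_assoc,
      inv_mul_cancel₀ (ne_of_gt hl0), one_mul, one_mul] at h5
    rw [one_div]
    linarith
  have h6 : 1/((R+1)/t) = t/(R+1) := by rw [one_div, inv_div]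
  rwa [h6] at h4

end Aux

/-- If `f = e^{-φ}` is an upper semi-continuous log-concave function on `ℝⁿ`
(`φ` lower semi-continuous, convex, with values in `ℝ ∪ {+∞}`) with nonzero finite `L¹` norm,
then there are `c > 0` and `d ∈ ℝ` with `φ(x) ≥ c‖x‖ + d` for all `x`. -/
theorem stmt0 {n : ℕ} (hn : 0 < n) (φ : EuclideanSpace ℝ (Fin n) → EReal)
    (hlsc : LowerSemicontinuous φ) (hconv : ERealConvexOn φ)
    (hbot : ∀ x, φ x ≠ ⊥)
    (f : EuclideanSpace ℝ (Fin n) → ℝ) (hf : ∀ x, f x = expNegE (φ x))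
    (hint : Integrable f) (hpos : 0 < ∫ x, f x) :
    ∃ c : ℝ, 0 < c ∧ ∃ d : ℝ, ∀ x, ((c * ‖x‖ + d : ℝ) : EReal) ≤ φ x := by
  classical
  -- sublevel sets
  set A : ℝ → Set (EuclideanSpace ℝ (Fin n)) := fun c => {x | φ x ≤ ((c : ℝ) : EReal)} with hA
  have hAclosed : ∀ c : ℝ, IsClosed (A c) := fun c => hlsc.isClosed_preimage _
  have hAconv : ∀ c : ℝ, Convex ℝ (A c) := fun c => aux_sublevel_convex hconv hbot c
  have hAfin : ∀ c : ℝ, volume (A c) ≠ ⊤ := by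
    intro c
    have hsub : A c ⊆ {x | Real.exp (-c) ≤ f x} := by
      intro x hx
      obtain ⟨v, hv, hvc⟩ := aux_getReal hbot hx
      have hne : φ x ≠ ⊤ := by rw [hv]; exact EReal.coe_ne_top v
      have : f x = Real.exp (-(φ x).toReal) := by rw [hf x, expNegE, if_neg hne]
      rw [mem_setOf_eq, this, hv, EReal.toReal_coe]
      exact Real.exp_le_exp.2 (by linarith)
    exact (lt_of_le_of_lt (measure_mono hsub)
      (hint.measure_ge_lt_top (Real.exp_pos _))).ne
  -- find a sublevel set of positive measure
  have hexk : ∃ k : ℕ, 0 < volume (A k) := by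
    by_contra hcon
    push_neg at hcon
    have hzero : ∀ k : ℕ, volume (A k) = 0 := fun k => le_antisymm (hcon k) zero_le
    have hae : f =ᵐ[volume] 0 := by
      have hsub : {x | f x ≠ 0} ⊆ ⋃ k : ℕ, A k := by
        intro x hx
        have hne : φ x ≠ ⊤ := by
          intro h
          apply hx
          rw [hf x, expNegE, if_pos h]
        have hrepr := EReal.coe_toReal hne (hbot x)
        refine mem_iUnion.2 ⟨⌈(φ x).toReal⌉₊, ?_⟩
        rw [hA, mem_setOf_eq, ← hrepr]
        exact_mod_cast EReal.coe_le_coe_iff.2 ((Nat.le_ceil _))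
      have : volume {x | f x ≠ 0} = 0 :=
        measure_mono_null hsub (measure_iUnion_null fun k => hzero k)
      exact this
    have h0 : (∫ x, f x) = 0 := by rw [integral_congr_ae hae]; simp
    rw [h0] at hpos
    exact lt_irrefl _ hpos
  obtain ⟨k, hk⟩ := hexk
  set K : ℝ := (k : ℝ) with hK
  -- interior of A K is nonempty
  have hint_ne : (interior (A K)).Nonempty := by
    by_contra hcon
    rw [Set.not_nonempty_iff_eq_empty] at hcon
    have : frontier (A K) = A K := by
      rw [frontier, (hAclosed K).closure_eq, hcon, diff_empty]
    have h0 : volume (A K) = 0 := by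
      rw [← this]; exact (hAconv K).addHaar_frontier _
    rw [hK] at h0
    exact absurd hk (by simp [hK, h0])
  obtain ⟨x₀, hx₀⟩ := hint_ne
  obtain ⟨ε, hε, hball⟩ := Metric.isOpen_iff.1 isOpen_interior x₀ hx₀
  set r : ℝ := ε / 2 with hr
  have hrpos : 0 < r := by positivity
  have hball' : closedBall x₀ r ⊆ A K := by
    refine subset_trans (subset_trans ?_ hball) interior_subset
    intro y hy
    rw [mem_closedBall] at hy
    rw [mem_ball]
    linarith
  have hx₀A : x₀ ∈ A K := hball' (mem_closedBall_self (le_of_lt hrpos))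
  obtain ⟨a₀, ha₀, ha₀K⟩ := aux_getReal hbot hx₀A
  -- bounded superlevel set A (K+1)
  have hballA' : closedBall x₀ r ⊆ A (K + 1) := by
    refine subset_trans hball' ?_
    intro y hy
    exact le_trans hy (EReal.coe_le_coe_iff.2 (by linarith))
  obtain ⟨R, hR⟩ := aux_bounded hn (A (K+1)) (hAconv (K+1)) x₀ r hrpos hballA' (hAfin (K+1))
  have hR0 : 0 ≤ R := by
    have := hR (hballA' (mem_closedBall_self (le_of_lt hrpos)))
    rwa [mem_closedBall, dist_self] at this
  -- outer bound
  have houter : ∀ x : EuclideanSpace ℝ (Fin n), R + 1 ≤ ‖x - x₀‖ → ∀ a : ℝ, φ x = (a : EReal) →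
      K + ‖x - x₀‖ / (R + 1) ≤ a := by
    intro x hx a hax
    set t : ℝ := ‖x - x₀‖ with ht
    have htpos : 0 < t := by linarith
    set l : ℝ := (R + 1) / t with hl
    have hl0 : 0 < l := by positivity
    have hl1 : l ≤ 1 := by rw [hl, div_le_one htpos]; linarith
    set y := (1 - l) • x₀ + l • x with hy
    have hyn : ‖y - x₀‖ = R + 1 := by
      have : y - x₀ = l • (x - x₀) := by rw [hy]; module
      rw [this, norm_smul, Real.norm_eq_abs, abs_of_pos hl0, ← ht, hl,
        div_mul_cancel₀ _ (ne_of_gt htpos)]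
    have hynot : y ∉ A (K + 1) := by
      intro hmem
      have := hR hmem
      rw [mem_closedBall, dist_eq_norm, hyn] at this
      linarith
    have hylt : ((K + 1 : ℝ) : EReal) < φ y := by
      rw [hA, mem_setOf_eq] at hynot
      exact lt_of_not_ge hynot
    have hcx := hconv x₀ x (1 - l) l (by linarith) (le_of_lt hl0) (by ring)
    rw [ha₀, hax] at hcx
    have heq : ((1 - l : ℝ) : EReal) * (a₀ : EReal) + (l : EReal) * (a : EReal)
        = (((1 - l) * a₀ + l * a : ℝ) : EReal) := by
      rw [← EReal.coe_mul, ← EReal.coe_mul, ← EReal.coe_add]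
    rw [heq] at hcx
    have hfinal : (K + 1 : ℝ) < (1 - l) * a₀ + l * a :=
      EReal.coe_lt_coe_iff.1 (lt_of_lt_of_le hylt (hy ▸ hcx))
    rw [hl] at hfinal
    exact aux_outer_calc a a₀ K R t hR0 hx ha₀K hfinal
  -- inner bound
  set d₀ : ℝ := a₀ + (a₀ - K) * (R + 1) / r with hd₀
  have hinner : ∀ x : EuclideanSpace ℝ (Fin n), ‖x - x₀‖ ≤ R + 1 → ∀ a : ℝ, φ x = (a : EReal) →
      d₀ ≤ a := by
    intro x hx a hax
    set t : ℝ := ‖x - x₀‖ with ht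
    have ht0 : 0 ≤ t := norm_nonneg _
    rcases eq_or_lt_of_le ht0 with h0 | htpos
    · -- x = x₀
      have : x - x₀ = 0 := by
        rw [← norm_eq_zero]; exact h0.symm ▸ rfl
      have hxx : x = x₀ := by
        have := sub_eq_zero.1 this; exact this
      rw [hxx, ha₀] at hax
      have : a = a₀ := by exact_mod_cast (EReal.coe_eq_coe_iff.1 hax.symm)
      rw [this, hd₀]
      have : (a₀ - K) * (R + 1) / r ≤ 0 := by
        apply div_nonpos_of_nonpos_of_nonneg
        · nlinarith
        · linarith
      linarith
    · set u : EuclideanSpace ℝ (Fin n) := x₀ - (r / t) • (x - x₀) with hu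
      have hun : ‖u - x₀‖ = r := by
        have : u - x₀ = -((r / t) • (x - x₀)) := by rw [hu]; module
        rw [this, norm_neg, norm_smul, Real.norm_eq_abs,
          abs_of_pos (by positivity : (0:ℝ) < r / t), ← ht,
          div_mul_cancel₀ _ (ne_of_gt htpos)]
      have huA : u ∈ A K := hball' (by rw [mem_closedBall, dist_eq_norm, hun])
      obtain ⟨b, hb, hbK⟩ := aux_getReal hbot huA
      set l : ℝ := r / (t + r) with hl
      have hl0 : 0 < l := by positivity
      have hl1 : l < 1 := by
        rw [hl, div_lt_one (by linarith)]; linarith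
      have hcomb : (l : ℝ) • x + (1 - l) • u = x₀ := by
        rw [hu, hl]
        match_scalars
        · field_simp; ring
        · field_simp; ring
      have hcx := hconv x u l (1 - l) (le_of_lt hl0) (by linarith) (by ring)
      rw [hcomb, ha₀, hax, hb] at hcx
      have heq : ((l : ℝ) : EReal) * (a : EReal) + ((1 - l : ℝ) : EReal) * (b : EReal)
          = ((l * a + (1 - l) * b : ℝ) : EReal) := by
        rw [← EReal.coe_mul, ← EReal.coe_mul, ← EReal.coe_add]
      rw [heq] at hcx
      have hreal : a₀ ≤ l * a + (1 - l) * b := EReal.coe_le_coe_iff.1 hcx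
      rw [hl] at hreal
      rw [hd₀]
      exact aux_inner_calc a a₀ K R t r b hrpos htpos hx ha₀K hbK hreal
  -- combine
  set cc : ℝ := 1 / (R + 1) with hcc
  have hccpos : 0 < cc := by rw [hcc]; positivity
  refine ⟨cc, hccpos, min (K - cc * ‖x₀‖) (d₀ - cc * (‖x₀‖ + (R + 1))), fun x => ?_⟩
  by_cases htop : φ x = ⊤
  · rw [htop]; exact le_top
  have hrepr := EReal.coe_toReal htop (hbot x)
  rw [← hrepr, EReal.coe_le_coe_iff]
  set a : ℝ := (φ x).toReal with ha
  rcases le_or_gt (R + 1) ‖x - x₀‖ with hcase | hcase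
  · have hbd := houter x hcase a hrepr.symm
    have hnorm : ‖x‖ - ‖x₀‖ ≤ ‖x - x₀‖ := norm_sub_norm_le x x₀
    have hdiv : ‖x - x₀‖ / (R + 1) = cc * ‖x - x₀‖ := by
      rw [hcc]; ring
    rw [hdiv] at hbd
    have h1 : cc * ‖x‖ + (K - cc * ‖x₀‖) ≤ K + cc * ‖x - x₀‖ := by nlinarith
    have h2 : min (K - cc * ‖x₀‖) (d₀ - cc * (‖x₀‖ + (R + 1))) ≤ K - cc * ‖x₀‖ :=
      min_le_left _ _
    linarith
  · have hbd := hinner x hcase.le a hrepr.symm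
    have hnx : ‖x‖ ≤ ‖x₀‖ + (R + 1) := by
      have h3 : ‖x‖ ≤ ‖x - x₀‖ + ‖x₀‖ := by
        have := norm_add_le (x - x₀) x₀
        simpa using this
      linarith
    have h2 : min (K - cc * ‖x₀‖) (d₀ - cc * (‖x₀‖ + (R + 1))) ≤ d₀ - cc * (‖x₀‖ + (R + 1)) :=
      min_le_right _ _
    nlinarith
end
end

section
/- Let φ : ℝⁿ → ℝ ∪ {+∞} be a lower semi-continuous convex function with e^{-φ} having nonzero finite L¹ norm, let L ⊂ ℝⁿ be a compact convex set, and let t > 0. Then for every s > 0, the superlevel set {x : (e^{-φ} ⊕ t·𝟙_L)(x) ≥ s} equals {x : e^{-φ(x)} ≥ s} + tL (Minkowski sum). -/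
open MeasureTheory Filter Topology Pointwise

noncomputable section

/-- The Asplund sum `(f ⊕ t·g)(z) = sup_{x+ty=z} f(x) g(y)^t`. -/
def aspSum {n : ℕ} (f g : EuclideanSpace ℝ (Fin n) → ℝ) (t : ℝ)
    (z : EuclideanSpace ℝ (Fin n)) : ℝ :=
  sSup {r : ℝ | ∃ x y : EuclideanSpace ℝ (Fin n), x + t • y = z ∧ r = f x * g y ^ t}

/-- An upper semicontinuous real function attains its max on a nonempty compact set. -/
lemma usc_max_aux {X : Type*} [TopologicalSpace X] {f : X → ℝ}
    (hop : ∀ c : ℝ, IsOpen {x | f x < c}) {K : Set X} (hK : IsCompact K)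
    (hne : K.Nonempty) : ∃ x₀ ∈ K, ∀ x ∈ K, f x ≤ f x₀ := by
  by_contra h
  push_neg at h
  obtain ⟨F, hF⟩ := hK.elim_finite_subcover (fun x : K => {y | f y < f x.1})
    (fun x => hop _) (by
      intro y hy
      obtain ⟨x, hx, hxy⟩ := h y hy
      exact Set.mem_iUnion.2 ⟨⟨x, hx⟩, hxy⟩)
  have hFne : F.Nonempty := by
    obtain ⟨y, hy⟩ := hne
    obtain ⟨i, hi, -⟩ := Set.mem_iUnion₂.1 (hF hy)
    exact ⟨i, hi⟩
  obtain ⟨x₀, hx₀F, hmax⟩ := F.exists_max_image (fun x => f x.1) hFne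
  obtain ⟨i, hiF, hlt⟩ := Set.mem_iUnion₂.1 (hF x₀.2)
  exact absurd (hmax i hiF) (not_le.2 hlt)

/-- For `f = e^{-φ}` log-concave with nonzero finite `L¹` norm, `L` compact convex,
and `t > 0`, for every `s > 0` the superlevel set `{x : (f ⊕ t·𝟙_L)(x) ≥ s}` equals
`{x : f(x) ≥ s} + t•L`. -/
theorem stmt3 {n : ℕ} (hn : 0 < n) (φ : EuclideanSpace ℝ (Fin n) → EReal)
    (hlsc : LowerSemicontinuous φ) (hconv : ERealConvexOn φ) (hbot : ∀ x, φ x ≠ ⊥)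
    (f : EuclideanSpace ℝ (Fin n) → ℝ) (hf : ∀ x, f x = expNegE (φ x))
    (hint : Integrable f) (hpos : 0 < ∫ x, f x)
    (L : Set (EuclideanSpace ℝ (Fin n))) (hLc : IsCompact L) (hLconv : Convex ℝ L)
    (t : ℝ) (ht : 0 < t) :
    ∀ s : ℝ, 0 < s →
      {z | s ≤ aspSum f (Set.indicator L fun _ => (1 : ℝ)) t z} =
        {x | s ≤ f x} + t • L := by
  -- basic facts about f
  have hf0 : ∀ x, 0 ≤ f x := by
    intro x
    rw [hf x, expNegE]
    split
    · exact le_refl 0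
    · exact (Real.exp_pos _).le
  -- f has open strict sublevel sets (upper semicontinuity)
  have hop : ∀ c : ℝ, IsOpen {x | f x < c} := by
    intro c
    rcases le_or_gt c 0 with hc | hc
    · convert isOpen_empty
      ext x
      simp only [Set.mem_setOf_eq, Set.mem_empty_iff_false, iff_false, not_lt]
      exact hc.trans (hf0 x)
    · have : {x | f x < c} = φ ⁻¹' Set.Ioi ((-Real.log c : ℝ) : EReal) := by
        ext x
        simp only [Set.mem_setOf_eq, Set.mem_preimage, Set.mem_Ioi]
        rw [hf x, expNegE]
        by_cases hx : φ x = ⊤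
        · simp [hx, hc, lt_top_iff_ne_top]
        · simp only [hx, if_false]
          have hcoe : ((φ x).toReal : EReal) = φ x := EReal.coe_toReal hx (hbot x)
          rw [← hcoe, EReal.coe_lt_coe_iff]
          simp only [EReal.toReal_coe]
          rw [← Real.exp_log hc, Real.exp_lt_exp]
          constructor
          · intro h; linarith [Real.log_exp (Real.log c)]
          · intro h; linarith [Real.log_exp (Real.log c)]
      rw [this]
      exact hlsc.isOpen_preimage _
  intro s hs
  -- notation for the Asplund-sum value set
  set g : EuclideanSpace ℝ (Fin n) → ℝ := Set.indicator L fun _ => (1 : ℝ) with hg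
  have hgt1 : ∀ y ∈ L, g y ^ t = 1 := by
    intro y hy
    rw [hg, Set.indicator_of_mem hy, Real.one_rpow]
  have hgt0 : ∀ y ∉ L, g y ^ t = 0 := by
    intro y hy
    rw [hg, Set.indicator_of_notMem hy, Real.zero_rpow ht.ne']
  -- key: if L is nonempty, the sup in the Asplund sum is attained
  have key : ∀ z : EuclideanSpace ℝ (Fin n), L.Nonempty →
      ∃ x₀, (∃ y ∈ L, x₀ + t • y = z) ∧
        (∀ r ∈ {r : ℝ | ∃ x y, x + t • y = z ∧ r = f x * g y ^ t}, r ≤ f x₀) := by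
    intro z hLne
    set K : Set (EuclideanSpace ℝ (Fin n)) := (fun y => z - t • y) '' L with hK
    have hKc : IsCompact K := hLc.image (continuous_const.sub (continuous_const_smul t))
    have hKne : K.Nonempty := hLne.image _
    obtain ⟨x₀, hx₀K, hmax⟩ := usc_max_aux hop hKc hKne
    obtain ⟨y₀, hy₀L, hy₀⟩ := hx₀K
    refine ⟨x₀, ⟨y₀, hy₀L, by rw [← hy₀]; simp only; module⟩, ?_⟩
    rintro r ⟨x, y, hxy, rfl⟩
    by_cases hy : y ∈ L
    · rw [hgt1 y hy, mul_one]
      have hxK : x ∈ K := ⟨y, hy, by simp only; rw [← hxy]; module⟩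
      exact hmax x hxK
    · rw [hgt0 y hy, mul_zero]
      exact hf0 x₀
  ext z
  simp only [Set.mem_setOf_eq]
  constructor
  · intro hz
    by_cases hLne : L.Nonempty
    · obtain ⟨x₀, ⟨y₀, hy₀L, hzeq⟩, hub⟩ := key z hLne
      have hsup : aspSum f g t z ≤ f x₀ := Real.sSup_le hub (hf0 x₀)
      exact ⟨x₀, le_trans hz hsup, t • y₀, Set.smul_mem_smul_set hy₀L, hzeq⟩
    · exfalso
      rw [Set.not_nonempty_iff_eq_empty] at hLne
      have : aspSum f g t z ≤ 0 := by
        apply Real.sSup_le _ le_rfl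
        rintro r ⟨x, y, -, rfl⟩
        rw [hgt0 y (by simp [hLne]), mul_zero]
      linarith
  · rintro ⟨x, hx, w, hw, rfl⟩
    obtain ⟨y, hyL, rfl⟩ := hw
    have hmem : f x ∈ {r : ℝ | ∃ x' y', x' + t • y' = x + t • y ∧ r = f x' * g y' ^ t} :=
      ⟨x, y, rfl, by rw [hgt1 y hyL, mul_one]⟩
    obtain ⟨x₀, -, hub⟩ := key (x + t • y) ⟨y, hyL⟩
    have hbdd : BddAbove {r : ℝ | ∃ x' y', x' + t • y' = x + t • y ∧ r = f x' * g y' ^ t} :=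
      ⟨f x₀, hub⟩
    exact le_trans hx (le_csSup hbdd hmem)
end
end

section
/- Let φ : ℝⁿ → ℝ ∪ {+∞} be lower semi-continuous with φ(0) < ∞, and let g : ℝⁿ → ℝ be bounded and continuous. Then at every point x where the Legendre transform φ* is differentiable, d/dt|_{t=0} (φ + tg)*(x) = −g(∇φ*(x)). -/
open Filter Topology
open scoped RealInnerProductSpace

noncomputable section

/-- The Legendre transform of an extended-real-valued function on `ℝⁿ`. -/
def legendre {n : ℕ} (φ : EuclideanSpace ℝ (Fin n) → EReal)
    (y : EuclideanSpace ℝ (Fin n)) : EReal :=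
  ⨆ x : EuclideanSpace ℝ (Fin n), ((⟪x, y⟫ : ℝ) : EReal) - φ x

lemma legendre_ge {n : ℕ} (φ : EuclideanSpace ℝ (Fin n) → EReal)
    (y z : EuclideanSpace ℝ (Fin n)) :
    ((⟪z, y⟫ : ℝ) : EReal) - φ z ≤ legendre φ y :=
  le_iSup (fun z => ((⟪z, y⟫ : ℝ) : EReal) - φ z) z

set_option maxHeartbeats 1000000

/-- If `φ : ℝⁿ → ℝ ∪ {+∞}` is lower semi-continuous with `φ(0) < ∞` and `g` is
bounded and continuous, then at every `x` where `φ*` is differentiable (with gradient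
`G = ∇φ*(x)`), `d/dt|_{t=0} (φ + t g)*(x) = −g(∇φ*(x))`. -/
theorem stmt10 {n : ℕ} (φ : EuclideanSpace ℝ (Fin n) → EReal)
    (hlsc : LowerSemicontinuous φ) (h0 : φ 0 ≠ ⊤) (hbot : ∀ x, φ x ≠ ⊥)
    (g : EuclideanSpace ℝ (Fin n) → ℝ) (hgc : Continuous g)
    (M : ℝ) (hgb : ∀ x, |g x| ≤ M)
    (x G : EuclideanSpace ℝ (Fin n)) (ψ : EuclideanSpace ℝ (Fin n) → ℝ)
    (hψ : ∀ᶠ z in 𝓝 x, ((ψ z : ℝ) : EReal) = legendre φ z)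
    (hgrad : HasGradientAt ψ G x) :
    HasDerivAt
      (fun t : ℝ => (legendre (fun z => φ z + ((t * g z : ℝ) : EReal)) x).toReal)
      (-(g G)) 0 := by
  classical
  have hψx : ((ψ x : ℝ) : EReal) = legendre φ x := hψ.self_of_nhds
  set A : ℝ := ψ x with hA
  have hM0 : 0 ≤ M := (abs_nonneg _).trans (hgb 0)
  -- rewrite the perturbed term when `φ z` is finite
  have hterm : ∀ (t : ℝ) (z), φ z ≠ ⊤ →
      ((⟪z, x⟫ : ℝ) : EReal) - (φ z + ((t * g z : ℝ) : EReal))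
        = (((⟪z, x⟫ - (φ z).toReal - t * g z : ℝ)) : EReal) := by
    intro t z hz
    lift (φ z) to ℝ using ⟨hz, hbot z⟩ with r hr
    rw [EReal.toReal_coe, ← EReal.coe_add, ← EReal.coe_sub]
    congr 1
    ring
  -- each unperturbed finite term is at most `A`
  have hle : ∀ z, φ z ≠ ⊤ → ⟪z, x⟫ - (φ z).toReal ≤ A := by
    intro z hz
    have h1 := legendre_ge φ x z
    rw [← hψx] at h1
    have h2 : ((⟪z, x⟫ - (φ z).toReal : ℝ) : EReal) = ((⟪z, x⟫ : ℝ) : EReal) - φ z := by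
      lift (φ z) to ℝ using ⟨hz, hbot z⟩ with r hr
      rw [EReal.toReal_coe, EReal.coe_sub]
    rw [← h2] at h1
    exact_mod_cast h1
  -- upper bound on the perturbed Legendre transform
  have hub : ∀ t : ℝ, legendre (fun z => φ z + ((t * g z : ℝ) : EReal)) x
      ≤ ((A + |t| * M : ℝ) : EReal) := by
    intro t
    refine iSup_le fun z => ?_
    show ((⟪z, x⟫ : ℝ) : EReal) - (φ z + ((t * g z : ℝ) : EReal)) ≤ ((A + |t| * M : ℝ) : EReal)
    by_cases hz : φ z = ⊤
    · have : φ z + ((t * g z : ℝ) : EReal) = ⊤ := by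
        rw [hz]; exact EReal.top_add_of_ne_bot (by exact_mod_cast EReal.coe_ne_bot _)
      rw [this, EReal.sub_top]
      exact bot_le
    · rw [hterm t z hz]
      have h1 := hle z hz
      have h2 : -(t * g z) ≤ |t| * M := by
        calc -(t * g z) ≤ |t * g z| := neg_le_abs _
          _ = |t| * |g z| := abs_mul _ _
          _ ≤ |t| * M := by
              have := hgb z
              have := abs_nonneg t
              nlinarith
      exact_mod_cast (by linarith : ⟪z, x⟫ - (φ z).toReal - t * g z ≤ A + |t| * M)
  -- lower bound (not bot) and ≠ ⊤
  have hne : ∀ t : ℝ, legendre (fun z => φ z + ((t * g z : ℝ) : EReal)) x ≠ ⊤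
      ∧ legendre (fun z => φ z + ((t * g z : ℝ) : EReal)) x ≠ ⊥ := by
    intro t
    constructor
    · intro h
      have h1 := hub t
      rw [h] at h1
      exact EReal.coe_ne_top _ (top_le_iff.mp h1)
    · intro h
      have h1 := legendre_ge (fun z => φ z + ((t * g z : ℝ) : EReal)) x 0
      rw [hterm t 0 h0, h] at h1
      exact EReal.coe_ne_bot _ (le_bot_iff.mp h1)
  -- extraction of approximate maximizers
  have hmax : ∀ (t ε : ℝ), 0 < ε → ∃ z, φ z ≠ ⊤ ∧
      (legendre (fun z => φ z + ((t * g z : ℝ) : EReal)) x).toReal - ε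
        ≤ ⟪z, x⟫ - (φ z).toReal - t * g z := by
    intro t ε hε
    set F := legendre (fun z => φ z + ((t * g z : ℝ) : EReal)) x with hF
    have hcoe : ((F.toReal : ℝ) : EReal) = F := EReal.coe_toReal (hne t).1 (hne t).2
    have hlt : (((F.toReal - ε : ℝ)) : EReal) < F := by
      rw [← hcoe]
      exact_mod_cast (by linarith : F.toReal - ε < F.toReal)
    rw [hF, legendre, lt_iSup_iff] at hlt
    obtain ⟨z, hz⟩ := hlt
    have hzt : φ z ≠ ⊤ := by
      intro htop
      have : φ z + ((t * g z : ℝ) : EReal) = ⊤ := by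
        rw [htop]; exact EReal.top_add_of_ne_bot (by exact_mod_cast EReal.coe_ne_bot _)
      rw [this, EReal.sub_top] at hz
      exact absurd hz (by simp)
    rw [hterm t z hzt] at hz
    exact ⟨z, hzt, le_of_lt (by exact_mod_cast hz)⟩
  -- approximate maximizers are close to G
  have hsub : ∀ δ : ℝ, 0 < δ → ∃ ε : ℝ, 0 < ε ∧ ∀ z, φ z ≠ ⊤ →
      A - ε ≤ ⟪z, x⟫ - (φ z).toReal → ‖z - G‖ ≤ δ := by
    intro δ hδ
    have hlo := hgrad.hasFDerivAt.isLittleO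
    rw [Asymptotics.isLittleO_iff] at hlo
    have hev := (hlo (show (0:ℝ) < δ/4 by linarith)).and hψ
    obtain ⟨ρ, hρ, hball⟩ := Metric.eventually_nhds_iff.mp hev
    refine ⟨δ * ρ / 16, by positivity, fun z hz hzA => ?_⟩
    by_cases hzG : z = G
    · simp [hzG]; linarith
    set u : EuclideanSpace ℝ (Fin n) := ‖z - G‖⁻¹ • (z - G) with hu
    have hzG' : z - G ≠ 0 := sub_ne_zero.mpr hzG
    have hun : ‖u‖ = 1 := by
      rw [hu, norm_smul, norm_inv, norm_norm, inv_mul_cancel₀ (norm_ne_zero_iff.mpr hzG')]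
    set y : EuclideanSpace ℝ (Fin n) := x + (ρ/2) • u with hy
    have hyx : y - x = (ρ/2) • u := by rw [hy]; abel
    have hdy : dist y x < ρ := by
      rw [dist_eq_norm, hyx, norm_smul, hun, Real.norm_eq_abs, abs_of_pos (by linarith)]
      linarith
    obtain ⟨hlin, heq⟩ := hball hdy
    simp only [InnerProductSpace.toDual_apply_apply] at hlin
    -- ψ y ≥ ⟪z, y⟫ - (φ z).toReal
    have h1 : ⟪z, y⟫ - (φ z).toReal ≤ ψ y := by
      have h2 := legendre_ge φ y z
      rw [← heq] at h2
      have h3 : ((⟪z, y⟫ - (φ z).toReal : ℝ) : EReal) = ((⟪z, y⟫ : ℝ) : EReal) - φ z := by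
        lift (φ z) to ℝ using ⟨hz, hbot z⟩ with r hr
        rw [EReal.toReal_coe, EReal.coe_sub]
      rw [← h3] at h2
      exact_mod_cast h2
    -- inner products
    have hinner : ⟪z, y⟫ - ⟪z, x⟫ = (ρ/2) * ⟪z, u⟫ := by
      rw [← inner_sub_right, hyx, real_inner_smul_right]
    have hGu : ⟪G, y - x⟫ = (ρ/2) * ⟪G, u⟫ := by
      rw [hyx, real_inner_smul_right]
    have hzu : ⟪z, u⟫ - ⟪G, u⟫ = ‖z - G‖ := by
      have hn0 : ‖z - G‖ ≠ 0 := norm_ne_zero_iff.mpr hzG'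
      rw [← inner_sub_left, hu, real_inner_smul_right, real_inner_self_eq_norm_sq, sq,
        ← mul_assoc, inv_mul_cancel₀ hn0, one_mul]
    -- the little-o bound
    have hlin' : |ψ y - ψ x - ⟪G, y - x⟫| ≤ (δ/4) * (ρ/2) := by
      have h4 : ‖y - x‖ = ρ/2 := by
        rw [hyx, norm_smul, hun, Real.norm_eq_abs, abs_of_pos (by linarith)]; ring
      calc |ψ y - ψ x - ⟪G, y - x⟫| = ‖ψ y - ψ x - ⟪G, y - x⟫‖ := (Real.norm_eq_abs _).symm
        _ ≤ (δ/4) * ‖y - x‖ := hlin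
        _ = (δ/4) * (ρ/2) := by rw [h4]
    have habs := abs_le.mp hlin'
    -- combine
    have key : (ρ/2) * ‖z - G‖ ≤ δ * ρ / 16 + (δ/4) * (ρ/2) := by
      have h5 : ⟪z, y⟫ - (φ z).toReal ≥ (ρ/2) * ⟪z, u⟫ + A - δ * ρ / 16 := by nlinarith [hinner]
      have h6 : ψ y - A ≤ (ρ/2) * ⟪G, u⟫ + (δ/4) * (ρ/2) := by
        rw [hGu] at habs; linarith [habs.2]
      nlinarith [hzu]
    nlinarith [norm_nonneg (z - G)]
  -- main derivative computation
  rw [hasDerivAt_iff_isLittleO, Asymptotics.isLittleO_iff]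
  intro c hc
  -- continuity of g at G
  obtain ⟨δ₀, hδ₀, hgδ⟩ := Metric.continuousAt_iff.mp hgc.continuousAt (c/4) (by linarith)
  have hgδ' : ∀ z, ‖z - G‖ ≤ δ₀/2 → |g z - g G| ≤ c/4 := by
    intro z hznorm
    have : dist z G < δ₀ := by rw [dist_eq_norm]; linarith
    exact le_of_lt (by simpa [Real.dist_eq] using hgδ this)
  obtain ⟨ε, hε, hεsub⟩ := hsub (δ₀/2) (by linarith)
  rw [Metric.eventually_nhds_iff]
  refine ⟨ε / (2*M + c + 1), by positivity, fun t ht => ?_⟩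
  rw [Real.dist_eq, sub_zero] at ht
  have hf0 : (legendre (fun z => φ z + ((((0:ℝ)) * g z : ℝ) : EReal)) x).toReal = A := by
    have hfun : (fun z => φ z + ((((0:ℝ)) * g z : ℝ) : EReal)) = φ := by
      funext z; norm_num
    rw [hfun, ← hψx, EReal.toReal_coe]
  by_cases ht0 : t = 0
  · subst ht0; simp
  have htpos : 0 < |t| := abs_pos.mpr ht0
  have htb : |t| * (2*M + c + 1) < ε := by
    have h7 : |t| < ε / (2*M + c + 1) := ht
    have h8 : (0:ℝ) < 2*M + c + 1 := by linarith
    calc |t| * (2*M + c + 1) < (ε / (2*M + c + 1)) * (2*M + c + 1) := by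
          exact mul_lt_mul_of_pos_right h7 h8
      _ = ε := by field_simp
  -- lower bound: pick a good maximizer for t = 0
  obtain ⟨w, hwt, hw⟩ := hmax 0 (|t| * c / 4) (by positivity)
  rw [hf0] at hw
  simp only [zero_mul, sub_zero] at hw
  set fr : ℝ := (legendre (fun z => φ z + ((t * g z : ℝ) : EReal)) x).toReal with hfrdef
  have hwA : A - ε ≤ ⟪w, x⟫ - (φ w).toReal := by nlinarith
  have hwG : ‖w - G‖ ≤ δ₀/2 := hεsub w hwt hwA
  have hgw : |g w - g G| ≤ c/4 := hgδ' w hwG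
  -- fr t ≥ (⟪w,x⟫ - pw) - t g w
  have hfrw : ⟪w, x⟫ - (φ w).toReal - t * g w ≤ fr := by
    have h1 : ((⟪w, x⟫ - (φ w).toReal - t * g w : ℝ) : EReal)
        ≤ legendre (fun z => φ z + ((t * g z : ℝ) : EReal)) x := by
      rw [← hterm t w hwt]
      exact legendre_ge (fun z => φ z + ((t * g z : ℝ) : EReal)) x w
    have h2 := EReal.toReal_le_toReal h1 (EReal.coe_ne_bot _) (hne t).1
    rwa [EReal.toReal_coe] at h2
  have hlow : -(c/2) * |t| ≤ fr - A + t * g G := by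
    have h10 : |t * (g G - g w)| ≤ |t| * (c/4) := by
      rw [abs_mul]
      have : |g G - g w| ≤ c/4 := by rw [abs_sub_comm]; exact hgw
      nlinarith [abs_nonneg t]
    have h2 : t * (g G - g w) = t * g G - t * g w := by ring
    linarith [neg_abs_le (t * (g G - g w)), h10, h2, hfrw, hw]
  -- also fr t ≥ A - |t| * (M + c/4)
  have hfrlow : A - |t| * M - |t| * c / 4 ≤ fr := by
    have h11 : t * g w ≤ |t| * M := by
      have h12 : |t * g w| ≤ |t| * M := by rw [abs_mul]; nlinarith [hgb w, abs_nonneg t]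
      linarith [le_abs_self (t * g w)]
    linarith
  -- upper bound: pick a good maximizer for t
  obtain ⟨z, hzt, hz⟩ := hmax t (|t| * c / 4) (by positivity)
  rw [← hfrdef] at hz
  have hzA : A - ε ≤ ⟪z, x⟫ - (φ z).toReal := by
    have h13 : -(|t| * M) ≤ t * g z := by
      have : |t * g z| ≤ |t| * M := by rw [abs_mul]; nlinarith [hgb z, abs_nonneg t]
      linarith [neg_abs_le (t * g z)]
    have hexp : |t| * (2*M + c + 1) = 2*(|t| * M) + |t| * c + |t| := by ring
    have hc4 : |t| * c / 4 ≤ |t| * c := by nlinarith [abs_nonneg t]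
    linarith [htb, abs_nonneg t]
  have hzG : ‖z - G‖ ≤ δ₀/2 := hεsub z hzt hzA
  have hgz : |g z - g G| ≤ c/4 := hgδ' z hzG
  have hzle : ⟪z, x⟫ - (φ z).toReal ≤ A := hle z hzt
  have hupp : fr - A + t * g G ≤ (c/2) * |t| := by
    have h14' : |t * (g G - g z)| ≤ |t| * (c/4) := by
      rw [abs_mul]
      have : |g G - g z| ≤ c/4 := by rw [abs_sub_comm]; exact hgz
      nlinarith [abs_nonneg t]
    have h2 : t * (g G - g z) = t * g G - t * g z := by ring
    linarith [le_abs_self (t * (g G - g z)), h14', h2, hz, hzle]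
  -- conclude
  show ‖fr - (legendre (fun z => φ z + ((((0:ℝ)) * g z : ℝ) : EReal)) x).toReal
      - (t - 0) • (-(g G))‖ ≤ c * ‖t - 0‖
  rw [hf0, sub_zero, smul_eq_mul, Real.norm_eq_abs, Real.norm_eq_abs]
  have h15 : fr - A - t * -(g G) = fr - A + t * g G := by ring
  rw [h15, abs_le]
  constructor
  · nlinarith [abs_nonneg t]
  · nlinarith [abs_nonneg t]
end
end

section
/- Let φ : ℝⁿ → [0,∞] be an even convex function with φ(0) = 0 that is finite in a neighborhood of the origin and tends to +∞ as |x| → ∞. Let K_φ = {x : φ(x) ≤ 1} and r_φ = min_{v∈Sⁿ⁻¹} h_{K_φ}(v) with v₀ attaining the minimum. Then for all x ∈ ℝⁿ, 2 r_φ (φ(x) + 1) ≥ |⟨x, v₀⟩|. -/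
open Filter Topology
open scoped RealInnerProductSpace

noncomputable section

/-- Let `φ : ℝⁿ → [0,∞]` be even convex, `φ(0) = 0`, finite near the origin and
tending to `+∞` at infinity. With `K_φ = {φ ≤ 1}`, `h_{K_φ}(v) = sup_{y ∈ K_φ} ⟨y,v⟩`,
`r_φ = min_{‖v‖=1} h_{K_φ}(v)` attained at `v₀`, one has `2 r_φ (φ(x)+1) ≥ |⟨x,v₀⟩|` for all
`x`. -/
theorem stmt13 {n : ℕ} (hn : 0 < n) (φ : EuclideanSpace ℝ (Fin n) → EReal)
    (hnn : ∀ x, 0 ≤ φ x) (heven : ∀ x, φ (-x) = φ x)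
    (hconv : ERealConvexOn φ) (h0 : φ 0 = 0)
    (hfin : ∀ᶠ x in 𝓝 (0 : EuclideanSpace ℝ (Fin n)), φ x ≠ ⊤)
    (hinf : Tendsto φ (comap (fun x : EuclideanSpace ℝ (Fin n) => ‖x‖) atTop) (𝓝 ⊤))
    (v₀ : EuclideanSpace ℝ (Fin n)) (hv₀ : ‖v₀‖ = 1) (r : ℝ)
    (hr : r = sSup ((fun y => (⟪y, v₀⟫ : ℝ)) '' {x | φ x ≤ 1}))
    (hmin : ∀ v : EuclideanSpace ℝ (Fin n), ‖v‖ = 1 →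
      r ≤ sSup ((fun y => (⟪y, v⟫ : ℝ)) '' {x | φ x ≤ 1})) :
    ∀ x : EuclideanSpace ℝ (Fin n),
      ((|⟪x, v₀⟫| : ℝ) : EReal) ≤ ((2 * r : ℝ) : EReal) * (φ x + 1) := by
  -- K is bounded: eventually φ > 1 at infinity
  have hev : ∀ᶠ b in (atTop : Filter ℝ), ∀ y : EuclideanSpace ℝ (Fin n), ‖y‖ = b → 1 < φ y := by
    have h1t : (1:EReal) < ⊤ := lt_top_iff_ne_top.mpr (by rw [← EReal.coe_one]; exact EReal.coe_ne_top 1)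
    have h := hinf.eventually (lt_mem_nhds h1t)
    rw [eventually_comap] at h
    exact h
  obtain ⟨R, hR⟩ := hev.exists_forall_of_atTop
  -- membership lemma: scaling into K
  have hmem : ∀ (x : EuclideanSpace ℝ (Fin n)) (t : ℝ), 0 ≤ t → φ x ≤ (t : EReal) →
      φ ((1/(t+1)) • x) ≤ 1 := by
    intro x t ht hx
    have ht1 : (0:ℝ) < t + 1 := by linarith
    have key := hconv x 0 (1/(t+1)) (t/(t+1)) (by positivity) (by positivity)
      (by rw [← add_div, add_comm, div_self ht1.ne'])
    rw [h0, smul_zero, add_zero, mul_zero, add_zero] at key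
    refine key.trans ?_
    calc ((1/(t+1) : ℝ) : EReal) * φ x ≤ ((1/(t+1) : ℝ) : EReal) * (t : EReal) := by
          apply mul_le_mul_of_nonneg_left hx
          exact_mod_cast by positivity
      _ = ((t/(t+1) : ℝ) : EReal) := by rw [← EReal.coe_mul]; ring_nf
      _ ≤ 1 := by
          rw [show (1:EReal) = ((1:ℝ):EReal) by norm_cast]
          exact_mod_cast by rw [div_le_one ht1]; linarith
  -- K bounded above under inner with v₀
  have hbdd : BddAbove ((fun y => (⟪y, v₀⟫ : ℝ)) '' {x | φ x ≤ 1}) := by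
    refine ⟨max R 0, ?_⟩
    rintro _ ⟨y, hy, rfl⟩
    have hyR : ‖y‖ ≤ max R 0 ∨ ⟪y, v₀⟫ ≤ max R 0 := by
      by_cases h : ‖y‖ ≤ max R 0
      · exact Or.inl h
      · exfalso
        push_neg at h
        have := hR ‖y‖ (le_of_lt (lt_of_le_of_lt (le_max_left R 0) h)) y rfl
        exact absurd hy (not_le.mpr this)
    rcases hyR with h | h
    · calc ⟪y, v₀⟫ ≤ ‖y‖ * ‖v₀‖ := real_inner_le_norm y v₀
        _ = ‖y‖ := by rw [hv₀, mul_one]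
        _ ≤ max R 0 := h
    · exact h
  -- upper bound for members
  have hub : ∀ y : EuclideanSpace ℝ (Fin n), φ y ≤ 1 → (⟪y, v₀⟫ : ℝ) ≤ r := by
    intro y hy
    rw [hr]
    exact le_csSup hbdd ⟨y, hy, rfl⟩
  -- r > 0
  have hrpos : 0 < r := by
    obtain ⟨ε, hε, hball⟩ := Metric.eventually_nhds_iff.mp hfin
    set z : EuclideanSpace ℝ (Fin n) := (ε/2) • v₀ with hz
    have hznorm : ‖z‖ = ε/2 := by
      rw [hz, norm_smul, hv₀, mul_one, Real.norm_eq_abs, abs_of_pos (by linarith)]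
    have hzfin : φ z ≠ ⊤ := hball (by rw [dist_zero_right, hznorm]; linarith)
    have hzbot : φ z ≠ ⊥ := ne_of_gt (lt_of_lt_of_le (by simp) (hnn z))
    set c : ℝ := (φ z).toReal with hc
    have hcz : φ z = (c : EReal) := (EReal.coe_toReal hzfin hzbot).symm
    have hc0 : 0 ≤ c := EReal.coe_nonneg.mp (hcz ▸ hnn z)
    have hmemz : φ ((1/(c+1)) • z) ≤ 1 := hmem z c hc0 (le_of_eq hcz)
    have := hub _ hmemz
    have hinner : (⟪(1/(c+1)) • z, v₀⟫ : ℝ) = (1/(c+1)) * (ε/2) := by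
      rw [hz, smul_smul, real_inner_smul_left, real_inner_self_eq_norm_sq, hv₀]
      ring
    rw [hinner] at this
    have : (0:ℝ) < (1/(c+1)) * (ε/2) := by positivity
    linarith [hub _ hmemz, hinner ▸ hub _ hmemz]
  -- main
  intro x
  by_cases htop : φ x = ⊤
  · rw [htop]
    have : (⊤ : EReal) + 1 = ⊤ := by
      rw [← EReal.coe_one]; exact EReal.top_add_coe 1
    rw [this, EReal.coe_mul_top_of_pos (by linarith)]
    exact le_top
  · have hbot : φ x ≠ ⊥ := ne_of_gt (lt_of_lt_of_le (by simp) (hnn x))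
    set t : ℝ := (φ x).toReal with htt
    have htx : φ x = (t : EReal) := (EReal.coe_toReal htop hbot).symm
    have ht0 : 0 ≤ t := EReal.coe_nonneg.mp (htx ▸ hnn x)
    have ht1 : (0:ℝ) < t + 1 := by linarith
    have hinv : (t+1) * (1/(t+1)) = 1 := by field_simp
    have h1 : (⟪x, v₀⟫ : ℝ) ≤ r * (t+1) := by
      have h := hub _ (hmem x t ht0 (le_of_eq htx))
      rw [real_inner_smul_left] at h
      have h' := mul_le_mul_of_nonneg_left h (le_of_lt ht1)
      rw [← mul_assoc, hinv, one_mul] at h'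
      linarith
    have h2 : -(⟪x, v₀⟫ : ℝ) ≤ r * (t+1) := by
      have hfx : φ (-x) ≤ (t : EReal) := by rw [heven]; exact le_of_eq htx
      have h := hub _ (hmem (-x) t ht0 hfx)
      rw [real_inner_smul_left, inner_neg_left] at h
      have h' := mul_le_mul_of_nonneg_left h (le_of_lt ht1)
      rw [← mul_assoc, hinv, one_mul] at h'
      linarith
    have habs : |(⟪x, v₀⟫ : ℝ)| ≤ 2 * r * (t+1) := by
      rw [abs_le]; constructor <;> nlinarith
    calc ((|⟪x, v₀⟫| : ℝ) : EReal) ≤ ((2 * r * (t+1) : ℝ) : EReal) := by exact_mod_cast habs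
      _ = ((2*r : ℝ) : EReal) * (φ x + 1) := by
          rw [htx, EReal.coe_mul]
          congr 1
end
end

section
/- Let Ω ⊂ ℝⁿ be open convex, and let (f_i) be a sequence of finite convex functions on Ω such that (f_i(x))_{i} is bounded for each x ∈ Ω. Then there exists a subsequence (f_{i_j}) converging pointwise on Ω to a finite convex function f, with uniform convergence on every compact subset of Ω. -/
open Filter Topology Metric

noncomputable section

/-- Local equi-Lipschitz bound for a pointwise bounded family of convex functions. -/
lemma stmt17_loc {n : ℕ} {Ω : Set (EuclideanSpace ℝ (Fin n))}
    (hΩo : IsOpen Ω) (hΩconv : Convex ℝ Ω)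
    {f : ℕ → EuclideanSpace ℝ (Fin n) → ℝ}
    (hconv : ∀ i, ConvexOn ℝ Ω (f i))
    (hbdd : ∀ x ∈ Ω, ∃ C : ℝ, ∀ i, |f i x| ≤ C)
    {x₀ : EuclideanSpace ℝ (Fin n)} (hx₀ : x₀ ∈ Ω) :
    ∃ r > 0, ∃ L : NNReal, ball x₀ r ⊆ Ω ∧
      ∀ i, LipschitzOnWith L (f i) (ball x₀ r) := by
  classical
  set S : EuclideanSpace ℝ (Fin n) → ℝ := fun x => ⨆ i, f i x with hS
  have hbdd' : ∀ x ∈ Ω, BddAbove (Set.range fun i => f i x) := by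
    intro x hx
    obtain ⟨C, hC⟩ := hbdd x hx
    exact ⟨C, by rintro _ ⟨i, rfl⟩; exact (abs_le.1 (hC i)).2⟩
  have hle : ∀ i, ∀ x ∈ Ω, f i x ≤ S x := fun i x hx => le_ciSup (hbdd' x hx) i
  have hSconv : ConvexOn ℝ Ω S := by
    refine ⟨hΩconv, fun x hx y hy a b ha hb hab => ?_⟩
    refine ciSup_le fun i => ((hconv i).2 hx hy ha hb hab).trans ?_
    have h1 : f i x ≤ S x := hle i x hx
    have h2 : f i y ≤ S y := hle i y hy
    simp only [smul_eq_mul]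
    nlinarith
  have hScont : ContinuousOn S Ω := hSconv.continuousOn hΩo
  have hSca : ContinuousAt S x₀ := (hScont x₀ hx₀).continuousAt (hΩo.mem_nhds hx₀)
  obtain ⟨r₀, hr₀, hr₀Ω⟩ := Metric.isOpen_iff.1 hΩo x₀ hx₀
  obtain ⟨δ, hδ, hδS⟩ := Metric.continuousAt_iff.1 hSca 1 one_pos
  set ρ : ℝ := min r₀ δ with hρdef
  have hρ : 0 < ρ := lt_min hr₀ hδ
  have hρΩ : ball x₀ ρ ⊆ Ω := (ball_subset_ball (min_le_left _ _)).trans hr₀Ω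
  obtain ⟨C, hC⟩ := hbdd x₀ hx₀
  have hC0 : 0 ≤ C := (abs_nonneg _).trans (hC 0)
  set M : ℝ := |S x₀| + 1 + 2 * C with hM
  have habs : ∀ i, ∀ y, dist y x₀ < ρ → |f i y| ≤ M := by
    intro i y hy
    have hyΩ : y ∈ Ω := hρΩ (mem_ball.2 hy)
    have hup : ∀ z, dist z x₀ < ρ → f i z ≤ |S x₀| + 1 := by
      intro z hz
      have := hδS (show dist z x₀ < δ from hz.trans_le (min_le_right _ _))
      have h2 : S z ≤ S x₀ + 1 := by
        have := abs_lt.1 this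
        linarith [this.2]
      have := hle i z (hρΩ (mem_ball.2 hz))
      have : f i z ≤ S x₀ + 1 := by linarith
      linarith [le_abs_self (S x₀)]
    rw [abs_le]
    constructor
    · -- lower bound via reflection
      set z : EuclideanSpace ℝ (Fin n) := (2:ℝ) • x₀ - y with hz
      have hdz : dist z x₀ < ρ := by
        have : z - x₀ = x₀ - y := by
          rw [hz]; module
        rw [dist_eq_norm, this, ← dist_eq_norm, dist_comm]
        exact hy
      have hzΩ : z ∈ Ω := hρΩ (mem_ball.2 hdz)
      have hmid : x₀ = (1/2 : ℝ) • y + (1/2 : ℝ) • z := by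
        rw [hz]; module
      have hconv2 := (hconv i).2 hyΩ hzΩ (by norm_num : (0:ℝ) ≤ 1/2)
        (by norm_num : (0:ℝ) ≤ 1/2) (by norm_num)
      rw [← hmid] at hconv2
      have h1 : -C ≤ f i x₀ := (abs_le.1 (hC i)).1
      have h2 : f i z ≤ |S x₀| + 1 := hup z hdz
      simp only [smul_eq_mul] at hconv2
      nlinarith
    · have := hup y hy
      nlinarith
  refine ⟨ρ/2, by positivity, (2 * M / (ρ/2)).toNNReal,
    (ball_subset_ball (by linarith)).trans hρΩ, fun i => ?_⟩
  have hcb : ConvexOn ℝ (ball x₀ ρ) (f i) := (hconv i).subset hρΩ (convex_ball _ _)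
  have := hcb.lipschitzOnWith_of_abs_le (by positivity : (0:ℝ) < ρ/2)
    (fun a ha => habs i a ha)
  rwa [show ρ - ρ/2 = ρ/2 by ring] at this

/-- Rockafellar's selection theorem: A pointwise bounded sequence of finite
convex functions on an open convex `Ω ⊆ ℝⁿ` has a subsequence converging pointwise on `Ω` to a
finite convex function, uniformly on every compact subset of `Ω`. -/
theorem stmt17 {n : ℕ} (Ω : Set (EuclideanSpace ℝ (Fin n)))
    (hΩo : IsOpen Ω) (hΩconv : Convex ℝ Ω)
    (f : ℕ → EuclideanSpace ℝ (Fin n) → ℝ)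
    (hconv : ∀ i, ConvexOn ℝ Ω (f i))
    (hbdd : ∀ x ∈ Ω, ∃ C : ℝ, ∀ i, |f i x| ≤ C) :
    ∃ σ : ℕ → ℕ, StrictMono σ ∧
      ∃ g : EuclideanSpace ℝ (Fin n) → ℝ, ConvexOn ℝ Ω g ∧
        (∀ x ∈ Ω, Tendsto (fun j => f (σ j) x) atTop (𝓝 (g x))) ∧
        ∀ K : Set (EuclideanSpace ℝ (Fin n)), K ⊆ Ω → IsCompact K →
          TendstoUniformlyOn (fun j => f (σ j)) g atTop K := by
  classical
  set C : EuclideanSpace ℝ (Fin n) → ℝ :=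
    fun x => if h : x ∈ Ω then (hbdd x h).choose else 0 with hCdef
  have hC : ∀ x, x ∈ Ω → ∀ i, |f i x| ≤ C x := by
    intro x h i
    simp only [hCdef, dif_pos h]
    exact (hbdd x h).choose_spec i
  obtain ⟨D, hDcnt, hDdense⟩ := TopologicalSpace.exists_countable_dense ↥Ω
  haveI : Countable ↥D := hDcnt.to_subtype
  have hTc : IsCompact (Set.pi Set.univ fun d : ↥D => Set.Icc (-(C d.1.1)) (C d.1.1)) :=
    isCompact_univ_pi fun d => isCompact_Icc
  have hFT : ∀ i, (fun d : ↥D => f i d.1.1) ∈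
      Set.pi Set.univ fun d : ↥D => Set.Icc (-(C d.1.1)) (C d.1.1) := by
    intro i d _
    exact abs_le.1 (hC d.1.1 d.1.2 i)
  obtain ⟨Lim, -, σ, hσ, hσt⟩ := hTc.tendsto_subseq hFT
  have hDconv : ∀ d : ↥D, Tendsto (fun j => f (σ j) d.1.1) atTop (𝓝 (Lim d)) := by
    intro d
    exact tendsto_pi_nhds.1 hσt d
  refine ⟨σ, hσ, ?_⟩
  have hloc := fun x (hx : x ∈ Ω) => stmt17_loc hΩo hΩconv hconv hbdd hx
  -- pointwise Cauchy on Ω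
  have hCauchy : ∀ x ∈ Ω, CauchySeq fun j => f (σ j) x := by
    intro x hx
    rw [Metric.cauchySeq_iff]
    intro ε hε
    obtain ⟨r, hr, L, hrΩ, hL⟩ := hloc x hx
    set δ : ℝ := min (r / 2) (ε / (3 * ((L : ℝ) + 1))) with hδdef
    have hδ : 0 < δ := lt_min (by linarith) (by positivity)
    obtain ⟨d, hdD, hdd⟩ := hDdense.exists_dist_lt ⟨x, hx⟩ hδ
    have hdx : dist x d.1 < δ := by rwa [Subtype.dist_eq] at hdd
    have hdball : d.1 ∈ ball x r := by
      rw [mem_ball, dist_comm]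
      exact hdx.trans_le ((min_le_left _ _).trans (by linarith))
    have hLd : ∀ i, dist (f i x) (f i d.1) ≤ (L : ℝ) * δ := by
      intro i
      calc dist (f i x) (f i d.1) ≤ (L : ℝ) * dist x d.1 :=
            (hL i).dist_le_mul x (mem_ball_self hr) d.1 hdball
        _ ≤ (L : ℝ) * δ := by
            exact mul_le_mul_of_nonneg_left hdx.le L.coe_nonneg
    have hLδ : (L : ℝ) * δ ≤ ε / 3 := by
      have h1 : δ ≤ ε / (3 * ((L : ℝ) + 1)) := min_le_right _ _
      have h2 : (0:ℝ) ≤ L := L.coe_nonneg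
      have h3 : (L : ℝ) * δ ≤ (L : ℝ) * (ε / (3 * ((L : ℝ) + 1))) :=
        mul_le_mul_of_nonneg_left h1 h2
      have h4 : (L : ℝ) * (ε / (3 * ((L : ℝ) + 1))) ≤ ε / 3 := by
        rw [mul_comm, div_mul_eq_mul_div, div_le_div_iff₀ (by positivity) (by norm_num)]
        nlinarith
      linarith
    obtain ⟨N, hN⟩ := Metric.cauchySeq_iff.1 ((hDconv ⟨d, hdD⟩).cauchySeq) (ε / 3)
      (by linarith)
    refine ⟨N, fun m hm k hk => ?_⟩
    calc dist (f (σ m) x) (f (σ k) x)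
        ≤ dist (f (σ m) x) (f (σ m) d.1) + dist (f (σ m) d.1) (f (σ k) d.1) +
          dist (f (σ k) d.1) (f (σ k) x) := dist_triangle4 _ _ _ _
      _ < ε := by
          have h1 := hLd (σ m)
          have h2 : dist (f (σ m) d.1) (f (σ k) d.1) < ε / 3 := hN m hm k hk
          have h3 := hLd (σ k)
          rw [dist_comm] at h3
          linarith
  set g : EuclideanSpace ℝ (Fin n) → ℝ :=
    fun x => limUnder atTop fun j => f (σ j) x with hgdef
  have htend : ∀ x ∈ Ω, Tendsto (fun j => f (σ j) x) atTop (𝓝 (g x)) := by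
    intro x hx
    obtain ⟨l, hl⟩ := cauchySeq_tendsto_of_complete (hCauchy x hx)
    have : g x = l := hl.limUnder_eq
    rw [this]
    exact hl
  have hgconv : ConvexOn ℝ Ω g := by
    refine ⟨hΩconv, fun x hx y hy a b ha hb hab => ?_⟩
    have hxy : a • x + b • y ∈ Ω := hΩconv hx hy ha hb hab
    refine le_of_tendsto_of_tendsto' (htend _ hxy)
      (((htend x hx).const_mul a).add ((htend y hy).const_mul b)) fun j => ?_
    simpa [smul_eq_mul] using (hconv (σ j)).2 hx hy ha hb hab
  refine ⟨g, hgconv, htend, ?_⟩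
  intro K hK hKc
  -- equicontinuity on K
  have heq : EquicontinuousOn (fun j => f (σ j)) K := by
    intro x hxK
    obtain ⟨r, hr, L, hrΩ, hL⟩ := hloc x (hK hxK)
    intro U hU
    obtain ⟨ε, hε, hεU⟩ := mem_uniformity_dist.1 hU
    have hball : ball x (min r (ε / ((L : ℝ) + 1))) ∈ 𝓝 x :=
      ball_mem_nhds x (lt_min hr (by positivity))
    filter_upwards [nhdsWithin_le_nhds hball] with y hy i
    apply hεU
    have hyr : y ∈ ball x r := mem_ball.2 ((mem_ball.1 hy).trans_le (min_le_left _ _))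
    have hyd : dist x y < ε / ((L : ℝ) + 1) := by
      rw [dist_comm]; exact (mem_ball.1 hy).trans_le (min_le_right _ _)
    calc dist (f (σ i) x) (f (σ i) y) ≤ (L : ℝ) * dist x y :=
          (hL (σ i)).dist_le_mul x (mem_ball_self hr) y hyr
      _ < ε := by
          have h1 : ((L : ℝ) + 1) * dist x y < ε := by
            rw [mul_comm, ← lt_div_iff₀ (by positivity)]
            exact hyd
          nlinarith [dist_nonneg (x := x) (y := y), L.coe_nonneg]
  -- Ascoli upgrade
  have hpt : Tendsto ((⋃₀ {K}).restrict ∘ fun j x => f (σ j) x) atTop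
      (𝓝 ((⋃₀ {K}).restrict g)) := by
    rw [tendsto_pi_nhds]
    rintro ⟨y, hy⟩
    rw [Set.sUnion_singleton] at hy
    exact htend y (hK hy)
  have hiff := EquicontinuousOn.tendsto_uniformOnFun_iff_pi'
    (𝔖 := {K}) (fun K' hK' => by rwa [Set.mem_singleton_iff.1 hK'])
    (fun K' hK' => by rwa [Set.mem_singleton_iff.1 hK']) atTop g
  have := (UniformOnFun.tendsto_iff_tendstoUniformlyOn.1 (hiff.2 hpt)) K rfl
  exact this
end
end
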